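/- Let N, M, k, J, r > 0, μ ∈ ℝ, τ > 0 and σ ∈ (0, π/(√3 τ)), and for V > 0 define f_w(σ, V) = (e^{−rτ}/(N + M k)) ∫₀¹ max(k·V·exp(μτ + (σ√3 τ/π)·ln(α/(1−α))) − N·J, 0) dα. Then for every V > 0 at which the set {α ∈ (0,1) : k·V·exp(μτ + (σ√3 τ/π)·ln(α/(1−α))) = N·J} has Lebesgue measure zero, the function V ↦ f_w(σ, V) is differentiable at V with derivative ∂f_w/∂V = (e^{−rτ} k/(N + M k)) ∫₀¹ exp(μτ + (σ√3 τ/π)·ln(α/(1−α)))·𝟙{k·V·exp(μτ + (σ√3 τ/π)·ln(α/(1−α))) > N·J} dα; in particular 0 ≤ ∂f_w/∂V ≤ (e^{−rτ} k/(N + M k)) ∫₀¹ exp(μτ + (σ√3 τ/π)·ln(α/(1−α))) dα. -/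

import Mathlib

/-!
For fixed `α`, the payoff `y ↦ max (y * g α - K) 0` is `|g α|`-Lipschitz and differentiable
wherever `y * g α ≠ K`, so as soon as `g` is integrable we may differentiate under the integral
sign with `|g|` as dominating function. Here `g α = exp (μτ) * (α / (1 - α)) ^ c`, whose only
singularity on `(0, 1)` is of order `(1 - α) ^ (-c)` at `1`, integrable because `c < 1`.
The derivative in `V` then follows from the chain rule through `y = k * V`.
-/

open Real Set MeasureTheory Filter Topology

theorem integrableOn_exp_add_mul_log_div_one_sub (a : ℝ) {c : ℝ}
    (hc₀ : 0 ≤ c) (hc₁ : c < 1) :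
    IntegrableOn (fun α => exp (a + c * log (α / (1 - α)))) (Ioo 0 1) := by
  have hbound : IntegrableOn (fun α : ℝ => exp a * (1 - α) ^ (-c)) (Ioo 0 1) := by
    have h := (intervalIntegral.intervalIntegrable_rpow' (a := 0) (b := 1)
      (show -1 < -c by linarith)).comp_sub_left 1
    simp only [sub_zero, sub_self] at h
    exact (h.symm.1.mono_set Ioo_subset_Ioc_self).const_mul _
  refine hbound.mono' (Measurable.aestronglyMeasurable (by measurability)) ?_
  filter_upwards [ae_restrict_mem measurableSet_Ioo] with α ⟨hα₀, hα₁⟩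
  have hα₁' : 0 < 1 - α := by linarith
  -- `log α ≤ 0` on `(0, 1)`, so only the singularity of `(1 - α)⁻¹` at `1` remains
  have hlog : c * log (α / (1 - α)) ≤ log (1 - α) * -c := by
    rw [log_div hα₀.ne' hα₁'.ne']
    nlinarith [log_nonpos hα₀.le hα₁.le]
  rw [norm_of_nonneg (exp_pos _).le, rpow_def_of_pos hα₁', ← exp_add]
  exact exp_le_exp.mpr (by linarith)

theorem lipschitzWith_max_mul_sub_const (g K : ℝ) :
    LipschitzWith (nnabs g) (fun y : ℝ => max (y * g - K) 0) := by
  refine LipschitzWith.of_dist_le_mul fun x y => ?_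
  rw [dist_eq, dist_eq, coe_nnabs]
  calc |max (x * g - K) 0 - max (y * g - K) 0|
      ≤ |(x * g - K) - (y * g - K)| := abs_max_sub_max_le_abs _ _ _
    _ = |g| * |x - y| := by rw [← abs_mul]; ring_nf

theorem hasDerivAt_max_mul_sub_const {g K x : ℝ} (h : x * g ≠ K) :
    HasDerivAt (fun y : ℝ => max (y * g - K) 0) (g * if x * g > K then 1 else 0) x := by
  have hcont : Continuous fun y : ℝ => y * g - K := by fun_prop
  rcases h.lt_or_gt with hlt | hgt
  · rw [if_neg hlt.not_gt, mul_zero]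
    refine (hasDerivAt_const x (0 : ℝ)).congr_of_eventuallyEq ?_
    filter_upwards [hcont.continuousAt.eventually (gt_mem_nhds (sub_neg.mpr hlt))] with y hy
    exact max_eq_right hy.le
  · rw [if_pos hgt, mul_one]
    refine (((hasDerivAt_id x).mul_const g).sub_const K).congr_of_eventuallyEq ?_
      |>.congr_deriv (one_mul g)
    filter_upwards [hcont.continuousAt.eventually (lt_mem_nhds (sub_pos.mpr hgt))] with y hy
    exact max_eq_left hy.le

theorem hasDerivAt_integral_max_mul_sub_const {Ω : Type*} [MeasurableSpace Ω] {μ : Measure Ω}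
    {g : Ω → ℝ} (hg : Integrable g μ) {K : ℝ} (hK : 0 ≤ K) {x : ℝ}
    (hx : ∀ᵐ ω ∂μ, x * g ω ≠ K) :
    HasDerivAt (fun y => ∫ ω, max (y * g ω - K) 0 ∂μ)
      (∫ ω, g ω * if x * g ω > K then 1 else 0 ∂μ) x := by
  have hF_meas (y : ℝ) : AEStronglyMeasurable (fun ω => max (y * g ω - K) 0) μ :=
    (by fun_prop : Continuous fun t : ℝ => max (y * t - K) 0).comp_aestronglyMeasurable
      hg.aestronglyMeasurable
  have hF_int : Integrable (fun ω => max (x * g ω - K) 0) μ := by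
    refine (hg.const_mul x).abs.mono' (hF_meas x) (ae_of_all _ fun ω => ?_)
    rw [norm_of_nonneg (le_max_right _ _)]
    exact max_le (by linarith [le_abs_self (x * g ω)]) (abs_nonneg _)
  have hF' : Measurable fun t : ℝ => t * if x * t > K then 1 else 0 :=
    measurable_id.mul <| .ite (measurableSet_lt measurable_const (by fun_prop))
      measurable_const measurable_const
  have hF'_meas : AEStronglyMeasurable (fun ω => g ω * if x * g ω > K then 1 else 0) μ :=
    (hF'.comp_aemeasurable hg.aemeasurable).aestronglyMeasurable
  exact (hasDerivAt_integral_of_dominated_loc_of_lip univ_mem (Eventually.of_forall hF_meas)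
    hF_int hF'_meas
    (ae_of_all _ fun ω => (lipschitzWith_max_mul_sub_const (g ω) K).lipschitzOnWith)
    hg (hx.mono fun ω => hasDerivAt_max_mul_sub_const)).2

theorem warrant_price_deriv_in_V_general
    (N M k J r μ τ σ : ℝ)
    (hN : 0 < N) (hM : 0 < M) (hk : 0 < k) (hJ : 0 < J)
    (hτ : 0 < τ) (hσ : σ ∈ Ioo 0 (π / (Real.sqrt 3 * τ)))
    (f_w : ℝ → ℝ)
    (hf : ∀ V : ℝ, f_w V = (Real.exp (-r * τ) / (N + M * k)) *
      ∫ α in Ioo (0 : ℝ) 1,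
        max (k * V * Real.exp (μ * τ + (σ * Real.sqrt 3 * τ / π) * Real.log (α / (1 - α)))
          - N * J) 0)
    (V : ℝ)
    (hzero : volume {α ∈ Ioo (0 : ℝ) 1 |
      k * V * Real.exp (μ * τ + (σ * Real.sqrt 3 * τ / π) * Real.log (α / (1 - α)))
        = N * J} = 0) :
    HasDerivAt f_w
      ((Real.exp (-r * τ) * k / (N + M * k)) *
        ∫ α in Ioo (0 : ℝ) 1,
          Real.exp (μ * τ + (σ * Real.sqrt 3 * τ / π) * Real.log (α / (1 - α))) *
            (if k * V * Real.exp (μ * τ + (σ * Real.sqrt 3 * τ / π) * Real.log (α / (1 - α)))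
                > N * J then (1 : ℝ) else 0)) V ∧
    0 ≤ (Real.exp (-r * τ) * k / (N + M * k)) *
        ∫ α in Ioo (0 : ℝ) 1,
          Real.exp (μ * τ + (σ * Real.sqrt 3 * τ / π) * Real.log (α / (1 - α))) *
            (if k * V * Real.exp (μ * τ + (σ * Real.sqrt 3 * τ / π) * Real.log (α / (1 - α)))
                > N * J then (1 : ℝ) else 0) ∧
    (Real.exp (-r * τ) * k / (N + M * k)) *
        ∫ α in Ioo (0 : ℝ) 1,
          Real.exp (μ * τ + (σ * Real.sqrt 3 * τ / π) * Real.log (α / (1 - α))) *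
            (if k * V * Real.exp (μ * τ + (σ * Real.sqrt 3 * τ / π) * Real.log (α / (1 - α)))
                > N * J then (1 : ℝ) else 0)
      ≤ (Real.exp (-r * τ) * k / (N + M * k)) *
        ∫ α in Ioo (0 : ℝ) 1,
          Real.exp (μ * τ + (σ * Real.sqrt 3 * τ / π) * Real.log (α / (1 - α))) := by
  set c := σ * √3 * τ / π
  have hc₀ : 0 ≤ c := by have := hσ.1; positivity
  have hc₁ : c < 1 := by
    rw [div_lt_one pi_pos, mul_assoc, ← lt_div_iff₀ (by positivity)]
    exact hσ.2
  have hg := integrableOn_exp_add_mul_log_div_one_sub (μ * τ) hc₀ hc₁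
  have hatm : ∀ᵐ α ∂volume.restrict (Ioo 0 1),
      k * V * exp (μ * τ + c * log (α / (1 - α))) ≠ N * J := by
    rw [ae_restrict_iff' measurableSet_Ioo]
    filter_upwards [measure_eq_zero_iff_ae_notMem.mp hzero] with α hα hmem heq
    exact hα ⟨hmem, heq⟩
  have hderiv := (hasDerivAt_integral_max_mul_sub_const hg (by positivity) hatm).comp V
    ((hasDerivAt_id' V).const_mul k)
  have hC : 0 ≤ exp (-r * τ) * k / (N + M * k) := by positivity
  refine ⟨?_, mul_nonneg hC (integral_nonneg fun α => ?_), mul_le_mul_of_nonneg_left ?_ hC⟩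
  · rw [funext hf]
    exact (hderiv.const_mul (exp (-r * τ) / (N + M * k))).congr_deriv (by ring)
  · exact mul_nonneg (exp_pos _).le (by split_ifs <;> norm_num)
  · refine integral_mono_of_nonneg (ae_of_all _ fun α => ?_) hg (ae_of_all _ fun α => ?_)
    · exact mul_nonneg (exp_pos _).le (by split_ifs <;> norm_num)
    · exact mul_le_of_le_one_right (exp_pos _).le (by split_ifs <;> norm_num)

/-- at every `V > 0` where the "at-the-money" set has Lebesgue
measure zero, `V ↦ f_w(σ, V)` is differentiable with derivative
`(e^{−rτ}k/(N+Mk)) ∫₀¹ exp(μτ + c·ln(α/(1−α))) 𝟙{payoff positive} dα`, and this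
derivative lies between `0` and `(e^{−rτ}k/(N+Mk)) ∫₀¹ exp(μτ + c·ln(α/(1−α))) dα`. -/
theorem warrant_price_deriv_in_V
    (N M k J r μ τ σ : ℝ)
    (hN : 0 < N) (hM : 0 < M) (hk : 0 < k) (hJ : 0 < J) (hr : 0 < r)
    (hτ : 0 < τ) (hσ : σ ∈ Ioo 0 (π / (Real.sqrt 3 * τ)))
    (f_w : ℝ → ℝ)
    (hf : ∀ V : ℝ, f_w V = (Real.exp (-r * τ) / (N + M * k)) *
      ∫ α in Ioo (0 : ℝ) 1,
        max (k * V * Real.exp (μ * τ + (σ * Real.sqrt 3 * τ / π) * Real.log (α / (1 - α)))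
          - N * J) 0)
    (V : ℝ) (hV : 0 < V)
    (hzero : volume {α ∈ Ioo (0 : ℝ) 1 |
      k * V * Real.exp (μ * τ + (σ * Real.sqrt 3 * τ / π) * Real.log (α / (1 - α)))
        = N * J} = 0) :
    HasDerivAt f_w
      ((Real.exp (-r * τ) * k / (N + M * k)) *
        ∫ α in Ioo (0 : ℝ) 1,
          Real.exp (μ * τ + (σ * Real.sqrt 3 * τ / π) * Real.log (α / (1 - α))) *
            (if k * V * Real.exp (μ * τ + (σ * Real.sqrt 3 * τ / π) * Real.log (α / (1 - α)))
                > N * J then (1 : ℝ) else 0)) V ∧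
    0 ≤ (Real.exp (-r * τ) * k / (N + M * k)) *
        ∫ α in Ioo (0 : ℝ) 1,
          Real.exp (μ * τ + (σ * Real.sqrt 3 * τ / π) * Real.log (α / (1 - α))) *
            (if k * V * Real.exp (μ * τ + (σ * Real.sqrt 3 * τ / π) * Real.log (α / (1 - α)))
                > N * J then (1 : ℝ) else 0) ∧
    (Real.exp (-r * τ) * k / (N + M * k)) *
        ∫ α in Ioo (0 : ℝ) 1,
          Real.exp (μ * τ + (σ * Real.sqrt 3 * τ / π) * Real.log (α / (1 - α))) *
            (if k * V * Real.exp (μ * τ + (σ * Real.sqrt 3 * τ / π) * Real.log (α / (1 - α)))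
                > N * J then (1 : ℝ) else 0)
      ≤ (Real.exp (-r * τ) * k / (N + M * k)) *
        ∫ α in Ioo (0 : ℝ) 1,
          Real.exp (μ * τ + (σ * Real.sqrt 3 * τ / π) * Real.log (α / (1 - α))) :=
  warrant_price_deriv_in_V_general N M k J r μ τ σ hN hM hk hJ hτ hσ f_w hf V hzero
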